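/- arXiv:1511.01990 — 4 statements merged into one kernel-verified Lean document; each statement's English description precedes it below -/
import Mathlib

section
/- Both marginal distributions of P equal the Cantor distribution P_c, i.e., P(A × ℝ) = P_c(A) and P(ℝ × B) = P_c(B) for all Borel sets A, B ⊆ ℝ, where P_c is the unique Borel probability measure on ℝ satisfying P_c = (1/2)P_c∘U_1^{-1} + (1/2)P_c∘U_2^{-1} with U_1(x) = x/3 and U_2(x) = x/3 + 2/3. -/
open MeasureTheory Set
open scoped ENNReal

/-- The four contractive similarities of ratio 1/3 generating the Sierpiński carpet.
`S 0, S 1, S 2, S 3` correspond to `S_1, S_2, S_3, S_4` in the paper. -/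
noncomputable def S (i : Fin 4) (p : ℝ × ℝ) : ℝ × ℝ :=
  (p.1 / 3 + (if i = 1 ∨ i = 3 then (2 : ℝ) / 3 else 0),
   p.2 / 3 + (if i = 2 ∨ i = 3 then (2 : ℝ) / 3 else 0))

/-- Composition `S_{σ_1} ∘ ⋯ ∘ S_{σ_k}` along a word `σ`. -/
noncomputable def Sw (σ : List (Fin 4)) : ℝ × ℝ → ℝ × ℝ :=
  σ.foldr (fun i g => S i ∘ g) id

/-- The unit square `J = [0,1] × [0,1]`. -/
def K : Set (ℝ × ℝ) := Icc (0, 0) (1, 1)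

/-- The basic square `J_σ = S_σ([0,1]²)`. -/
noncomputable def Jw (σ : List (Fin 4)) : Set (ℝ × ℝ) := Sw σ '' K

/-- The self-similarity equation `P = (1/4) ∑_{i=1}^4 P ∘ S_i⁻¹`. -/
def SelfSimilar (P : Measure (ℝ × ℝ)) : Prop :=
  P = (1 / 4 : ℝ≥0∞) • P.map (S 0) + (1 / 4 : ℝ≥0∞) • P.map (S 1)
    + (1 / 4 : ℝ≥0∞) • P.map (S 2) + (1 / 4 : ℝ≥0∞) • P.map (S 3)

/-- Distortion error of a set `α` of points: `∫ min_{a∈α} ‖x−a‖² dP`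
(squared Euclidean distance). -/
noncomputable def distortion (P : Measure (ℝ × ℝ)) (α : Set (ℝ × ℝ)) : ℝ :=
  ∫ x, (⨅ a ∈ α, ((x.1 - a.1) ^ 2 + (x.2 - a.2) ^ 2)) ∂P

/-- The `n`-th quantization error. -/
noncomputable def Vq (P : Measure (ℝ × ℝ)) (n : ℕ) : ℝ :=
  sInf (distortion P '' {α | α.Finite ∧ α.Nonempty ∧ α.ncard ≤ n})

/-- Both marginals of `P` equal the Cantor distribution `P_c`. -/
theorem stmt_3 (P : Measure (ℝ × ℝ)) [IsProbabilityMeasure P] (hP : SelfSimilar P)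
    (Pc : Measure ℝ) [IsProbabilityMeasure Pc]
    (hPc : Pc = (1 / 2 : ℝ≥0∞) • Pc.map (fun x : ℝ => x / 3)
        + (1 / 2 : ℝ≥0∞) • Pc.map (fun x : ℝ => x / 3 + 2 / 3))
    (huniq : ∀ Q : Measure ℝ, IsProbabilityMeasure Q →
      Q = (1 / 2 : ℝ≥0∞) • Q.map (fun x : ℝ => x / 3)
        + (1 / 2 : ℝ≥0∞) • Q.map (fun x : ℝ => x / 3 + 2 / 3) → Q = Pc) :
    (∀ A : Set ℝ, MeasurableSet A → P (A ×ˢ (univ : Set ℝ)) = Pc A) ∧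
      (∀ B : Set ℝ, MeasurableSet B → P ((univ : Set ℝ) ×ˢ B) = Pc B) := by

  have hS : ∀ i, Measurable (S i) := by
    intro i
    unfold S
    fun_prop
  have key : ∀ f : ℝ × ℝ → ℝ, Measurable f →
      (∀ p, f (S 0 p) = f p / 3) → (∀ p, f (S 1 p) = f p / 3 + 2 / 3) →
      (∀ p, f (S 2 p) = f p / 3) → (∀ p, f (S 3 p) = f p / 3 + 2 / 3) →
      P.map f = Pc := by
    intro f hf h0 h1 h2 h3
    have hprob : IsProbabilityMeasure (P.map f) := Measure.isProbabilityMeasure_map hf.aemeasurable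
    refine huniq _ hprob ?_
    have hdiv : Measurable fun x : ℝ => x / 3 := by fun_prop
    have hadd : Measurable fun x : ℝ => x / 3 + 2 / 3 := by fun_prop
    have hmap : ∀ (i : Fin 4) (g : ℝ → ℝ), Measurable g → (∀ p, f (S i p) = g (f p)) →
        (P.map (S i)).map f = (P.map f).map g := by
      intro i g hg hfg
      rw [Measure.map_map hf (hS i), Measure.map_map hg hf]
      congr 1
      funext p
      exact hfg p
    have h14 : (1 / 2 : ℝ≥0∞) = 1 / 4 + 1 / 4 := by
      rw [ENNReal.div_add_div_same]
      rw [show (1 + 1 : ℝ≥0∞) = 2 by norm_num]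
      rw [ENNReal.div_eq_div_iff] <;> norm_num
    conv_lhs => rw [hP]
    simp only [Measure.map_add _ _ hf, Measure.map_smul]
    rw [hmap 0 _ hdiv h0, hmap 1 _ hadd h1, hmap 2 _ hdiv h2, hmap 3 _ hadd h3,
      h14, add_smul, add_smul]
    abel
  have key2 : ∀ f : ℝ × ℝ → ℝ, Measurable f →
      (∀ p, f (S 0 p) = f p / 3) → (∀ p, f (S 1 p) = f p / 3) →
      (∀ p, f (S 2 p) = f p / 3 + 2 / 3) → (∀ p, f (S 3 p) = f p / 3 + 2 / 3) →
      P.map f = Pc := by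
    intro f hf h0 h1 h2 h3
    have hprob : IsProbabilityMeasure (P.map f) := Measure.isProbabilityMeasure_map hf.aemeasurable
    refine huniq _ hprob ?_
    have hdiv : Measurable fun x : ℝ => x / 3 := by fun_prop
    have hadd : Measurable fun x : ℝ => x / 3 + 2 / 3 := by fun_prop
    have hmap : ∀ (i : Fin 4) (g : ℝ → ℝ), Measurable g → (∀ p, f (S i p) = g (f p)) →
        (P.map (S i)).map f = (P.map f).map g := by
      intro i g hg hfg
      rw [Measure.map_map hf (hS i), Measure.map_map hg hf]
      congr 1
      funext p
      exact hfg p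
    have h14 : (1 / 2 : ℝ≥0∞) = 1 / 4 + 1 / 4 := by
      rw [ENNReal.div_add_div_same]
      rw [show (1 + 1 : ℝ≥0∞) = 2 by norm_num]
      rw [ENNReal.div_eq_div_iff] <;> norm_num
    conv_lhs => rw [hP]
    simp only [Measure.map_add _ _ hf, Measure.map_smul]
    rw [hmap 0 _ hdiv h0, hmap 1 _ hdiv h1, hmap 2 _ hadd h2, hmap 3 _ hadd h3,
      h14, add_smul, add_smul]
    abel
  have hfst : P.map Prod.fst = Pc := by
    refine key _ measurable_fst ?_ ?_ ?_ ?_ <;> intro p <;> simp [S]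
  have hsnd : P.map Prod.snd = Pc := by
    refine key2 _ measurable_snd ?_ ?_ ?_ ?_ <;> intro p <;> simp [S]
  constructor
  · intro A hA
    rw [← hfst, Measure.map_apply measurable_fst hA]
    congr 1
    ext p
    simp
  · intro B hB
    rw [← hsnd, Measure.map_apply measurable_snd hB]
    congr 1
    ext p
    simp
end

section
/- For any word σ ∈ I^k with k ≥ 1 and any (a,b) ∈ ℝ², ∫_{J_σ} ‖x − (a,b)‖² dP = (1/4^k)·((1/9^k)·(1/4) + ‖S_σ(1/2,1/2) − (a,b)‖²), where J_σ = S_σ([0,1]²). -/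
/-! Self-similarity gives `P A = ¼ ∑ᵢ P (Sᵢ⁻¹ A)`. Since each `Sᵢ` maps `K` into itself and
divides distances by 3, the mass at distance `> r` from `K` is at most the mass at distance
`> 3ⁿ r`, which tends to 0; so `P` lives on `K`. The first-level squares `Sᵢ K` are pairwise
disjoint, hence `P` restricted to `Sᵢ K` is `¼ P ∘ Sᵢ⁻¹`, and integrating `‖x - (a, b)‖²` over
`J_{iσ} = Sᵢ J_σ` becomes `¼ · ⅑` times the same integral over `J_σ`, with `(a, b)` replaced by
`Sᵢ⁻¹ (a, b)`. Induction on `σ` ends at `J_∅ = K`, where the same equation shows that each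
coordinate has mean `1/2` and second moment `3/8`, i.e. variance `1/8`. -/

open MeasureTheory Set
open scoped ENNReal

open Metric

lemma S_sub_S (i : Fin 4) (p q : ℝ × ℝ) : S i p - S i q = (3 : ℝ)⁻¹ • (p - q) := by
  ext <;>
    simp only [S, Prod.fst_sub, Prod.snd_sub, Prod.smul_fst, Prod.smul_snd, smul_eq_mul] <;> ring

lemma dist_S_S (i : Fin 4) (p q : ℝ × ℝ) : dist (S i p) (S i q) = dist p q / 3 := by
  rw [dist_eq_norm, S_sub_S, norm_smul, dist_eq_norm]
  norm_num
  ring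

lemma S_injective (i : Fin 4) : Function.Injective (S i) := fun p q h => by
  have := dist_S_S i p q
  rw [h, dist_self] at this
  exact dist_eq_zero.1 (by linarith)

lemma continuous_S (i : Fin 4) : Continuous (S i) := by
  unfold S; fun_prop

lemma mem_K_iff {p : ℝ × ℝ} : p ∈ K ↔ 0 ≤ p.1 ∧ p.1 ≤ 1 ∧ 0 ≤ p.2 ∧ p.2 ≤ 1 := by
  simp only [K, mem_Icc, Prod.le_def]; tauto

lemma isCompact_K : IsCompact K := isCompact_Icc

lemma K_nonempty : K.Nonempty := ⟨(0, 0), by simp [mem_K_iff]⟩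

lemma mapsTo_S_K (i : Fin 4) : MapsTo (S i) K K := by
  intro p hp
  rw [mem_K_iff] at hp ⊢
  simp only [S]
  refine ⟨?_, ?_, ?_, ?_⟩ <;> split_ifs <;> linarith

lemma disjoint_image_S_K {i j : Fin 4} (hij : i ≠ j) : Disjoint (S i '' K) (S j '' K) := by
  rw [Set.disjoint_left]
  rintro _ ⟨p, hp, rfl⟩ ⟨q, hq, hpq⟩
  rw [mem_K_iff] at hp hq
  simp only [S, Prod.ext_iff] at hpq
  fin_cases i <;> fin_cases j <;> simp_all <;> linarith

lemma infDist_S_le (i : Fin 4) (x : ℝ × ℝ) : infDist (S i x) K ≤ infDist x K / 3 := by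
  obtain ⟨y, hy, hxy⟩ := isCompact_K.exists_infDist_eq_dist K_nonempty x
  calc infDist (S i x) K ≤ dist (S i x) (S i y) := infDist_le_dist_of_mem (mapsTo_S_K i hy)
    _ = infDist x K / 3 := by rw [dist_S_S, hxy]

lemma Jw_cons (i : Fin 4) (σ : List (Fin 4)) : Jw (i :: σ) = S i '' Jw σ := by
  rw [Jw, Jw, ← image_comp]; rfl

lemma Jw_subset_K (σ : List (Fin 4)) : Jw σ ⊆ K := by
  induction σ with
  | nil => simp [Jw, Sw]
  | cons i σ ih => rw [Jw_cons]; exact (image_mono ih).trans (mapsTo_S_K i).image_subset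

lemma isCompact_Jw (σ : List (Fin 4)) : IsCompact (Jw σ) := by
  induction σ with
  | nil => simpa [Jw, Sw] using isCompact_K
  | cons i σ ih => rw [Jw_cons]; exact ih.image (continuous_S i)

namespace SelfSimilar

variable {P : Measure (ℝ × ℝ)}

lemma eq_smul_sum (hP : SelfSimilar P) : P = (1 / 4 : ℝ≥0∞) • ∑ i, P.map (S i) := by
  rw [Fin.sum_univ_four, smul_add, smul_add, smul_add]
  exact hP

lemma measure_le_of_preimage_subset (hP : SelfSimilar P) {A B : Set (ℝ × ℝ)}
    (hA : MeasurableSet A) (hAB : ∀ i, S i ⁻¹' A ⊆ B) : P A ≤ P B :=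
  calc P A = (1 / 4) * ∑ i, P (S i ⁻¹' A) := by
        conv_lhs => rw [hP.eq_smul_sum]
        simp only [Measure.smul_apply, Measure.coe_finsetSum, Finset.sum_apply, smul_eq_mul,
          Measure.map_apply (continuous_S _).measurable hA]
    _ ≤ (1 / 4) * ∑ _i : Fin 4, P B := by gcongr with i; exact hAB i
    _ = P B := by
        rw [Finset.sum_const, Finset.card_univ, Fintype.card_fin, nsmul_eq_mul, ← mul_assoc,
          Nat.cast_ofNat, one_div, ENNReal.inv_mul_cancel (by norm_num) (by norm_num), one_mul]

lemma measure_lt_infDist_eq_zero [IsFiniteMeasure P] (hP : SelfSimilar P) {r : ℝ} (hr : 0 < r) :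
    P {x | r < infDist x K} = 0 := by
  set A : ℕ → Set (ℝ × ℝ) := fun n => {x | 3 ^ n * r < infDist x K}
  have hA : ∀ n, MeasurableSet (A n) := fun n =>
    measurableSet_lt measurable_const (continuous_infDist_pt K).measurable
  have h_le : ∀ n, P (A 0) ≤ P (A n) := by
    intro n
    induction n with
    | zero => rfl
    | succ n ih =>
      refine ih.trans (hP.measure_le_of_preimage_subset (hA n) fun i x hx => ?_)
      have := infDist_S_le i x
      simp only [A, mem_preimage, mem_ofPred_eq] at hx ⊢
      rw [pow_succ]
      linarith
  have h_anti : Antitone A := fun m n hmn x hx =>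
    lt_of_le_of_lt (mul_le_mul_of_nonneg_right (pow_le_pow_right₀ (by norm_num) hmn) hr.le) hx
  have h_empty : ⋂ n, A n = ∅ := by
    refine eq_empty_of_forall_notMem fun x hx => ?_
    obtain ⟨n, hn⟩ := pow_unbounded_of_one_lt (infDist x K / r) (by norm_num : (1 : ℝ) < 3)
    have := mem_iInter.1 hx n
    simp only [A, mem_ofPred_eq] at this
    rw [div_lt_iff₀ hr] at hn
    linarith
  have h_lim := tendsto_measure_iInter_atTop (fun n => (hA n).nullMeasurableSet) h_anti
    ⟨0, measure_ne_top P _⟩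
  rw [h_empty, measure_empty] at h_lim
  simpa [A] using le_antisymm (ge_of_tendsto' h_lim h_le) zero_le

lemma ae_mem_K [IsFiniteMeasure P] (hP : SelfSimilar P) : ∀ᵐ x ∂P, x ∈ K := by
  rw [ae_iff]
  refine measure_mono_null (fun x hx => ?_) (measure_iUnion_null fun n : ℕ =>
    hP.measure_lt_infDist_eq_zero (Nat.one_div_pos_of_nat (n := n)))
  have hpos := (isCompact_K.isClosed.notMem_iff_infDist_pos K_nonempty).1 hx
  obtain ⟨n, hn⟩ := exists_nat_one_div_lt hpos
  exact mem_iUnion.2 ⟨n, hn⟩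

lemma integrable_of_continuous [IsFiniteMeasure P] (hP : SelfSimilar P) {E : Type*}
    [NormedAddCommGroup E] {f : ℝ × ℝ → E} (hf : Continuous f) : Integrable f P := by
  have := hf.continuousOn.integrableOn_compact isCompact_K (μ := P)
  rwa [IntegrableOn, Measure.restrict_eq_self_of_ae_mem hP.ae_mem_K] at this

lemma integral_eq_average [IsFiniteMeasure P] (hP : SelfSimilar P) {f : ℝ × ℝ → ℝ}
    (hf : Continuous f) : ∫ x, f x ∂P = (1 / 4) * ∑ i, ∫ x, f (S i x) ∂P := by
  conv_lhs => rw [hP.eq_smul_sum]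
  rw [integral_smul_measure, integral_finsetSum_measure fun i _ =>
    (integrable_map_measure hf.aestronglyMeasurable (continuous_S i).aemeasurable).2
      (hP.integrable_of_continuous (hf.comp (continuous_S i)))]
  simp only [integral_map (continuous_S _).aemeasurable hf.aestronglyMeasurable]
  norm_num

lemma restrict_image_S_K [IsFiniteMeasure P] (hP : SelfSimilar P) (i : Fin 4) :
    P.restrict (S i '' K) = (1 / 4 : ℝ≥0∞) • P.map (S i) := by
  have hT : MeasurableSet (S i '' K) := (isCompact_K.image (continuous_S i)).isClosed.measurableSet
  conv_lhs => rw [hP.eq_smul_sum]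
  rw [Measure.restrict_smul, ← Measure.restrictₗ_apply, map_sum, Finset.sum_eq_single i]
  · rw [Measure.restrictₗ_apply]
    congr 1
    exact Measure.restrict_eq_self_of_ae_mem ((ae_map_iff (continuous_S i).aemeasurable hT).2
      (hP.ae_mem_K.mono fun x hx => mem_image_of_mem _ hx))
  · intro j _ hji
    rw [Measure.restrictₗ_apply, Measure.restrict_eq_zero,
      Measure.map_apply (continuous_S j).measurable hT]
    exact measure_mono_null (fun x hx hxK =>
      (disjoint_image_S_K hji).ne_of_mem (mem_image_of_mem _ hxK) hx rfl) (ae_iff.1 hP.ae_mem_K)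
  · simp

lemma setIntegral_Jw_cons [IsFiniteMeasure P] (hP : SelfSimilar P) (i : Fin 4)
    (σ : List (Fin 4)) {f : ℝ × ℝ → ℝ} (hf : Continuous f) :
    ∫ x in Jw (i :: σ), f x ∂P = (1 / 4) * ∫ x in Jw σ, f (S i x) ∂P := by
  rw [Jw_cons, ← Measure.restrict_restrict_of_subset (image_mono (Jw_subset_K σ)),
    hP.restrict_image_S_K, Measure.restrict_smul, integral_smul_measure,
    setIntegral_map ((isCompact_Jw σ).image (continuous_S i)).isClosed.measurableSet
      hf.aestronglyMeasurable (continuous_S i).aemeasurable,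
    preimage_image_eq _ (S_injective i)]
  norm_num

lemma integral_sub_sq_of_coord [IsProbabilityMeasure P] (hP : SelfSimilar P)
    {g : ℝ × ℝ → ℝ} (hg : Continuous g) {e : Fin 4 → ℝ} (hgS : ∀ i x, g (S i x) = g x / 3 + e i)
    (he : ∑ i, e i = 4 / 3) (he2 : ∑ i, e i ^ 2 = 8 / 9) (a : ℝ) :
    ∫ x, (g x - a) ^ 2 ∂P = 1 / 8 + (1 / 2 - a) ^ 2 := by
  set m := ∫ x, g x ∂P
  set M := ∫ x, g x ^ 2 ∂P
  have hquad : ∀ α β γ : ℝ, ∫ x, (α * g x ^ 2 + β * g x + γ) ∂P = α * M + β * m + γ := by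
    intro α β γ
    have h1 := (hP.integrable_of_continuous (f := fun x => g x ^ 2) (by fun_prop)).const_mul α
    have h2 := (hP.integrable_of_continuous hg).const_mul β
    rw [integral_add (h1.fun_add h2) (integrable_const γ), integral_add h1 h2, integral_const_mul,
      integral_const_mul, integral_const, probReal_univ, one_smul]
  have hm : m = 1 / 2 := by
    have h := hP.integral_eq_average hg
    have hi : ∀ i, ∫ x, g (S i x) ∂P = m / 3 + e i := fun i => by
      convert hquad 0 (1 / 3) (e i) using 1
      · congr 1; ext x; rw [hgS]; ring
      · ring
    simp only [hi, Finset.sum_add_distrib, he, Finset.sum_const, Finset.card_univ,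
      Fintype.card_fin, nsmul_eq_mul] at h
    linarith
  have hM : M = 3 / 8 := by
    have h := hP.integral_eq_average (f := fun x => g x ^ 2) (by fun_prop)
    have hi : ∀ i, ∫ x, g (S i x) ^ 2 ∂P = M / 9 + 2 * e i / 3 * m + e i ^ 2 := fun i => by
      convert hquad (1 / 9) (2 * e i / 3) (e i ^ 2) using 1
      · congr 1; ext x; rw [hgS]; ring
      · ring
    simp only [hi, Finset.sum_add_distrib, ← Finset.sum_mul, ← Finset.sum_div, ← Finset.mul_sum,
      he, he2, Finset.sum_const, Finset.card_univ, Fintype.card_fin, nsmul_eq_mul, hm] at h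
    linarith
  calc ∫ x, (g x - a) ^ 2 ∂P = ∫ x, (1 * g x ^ 2 + (-2 * a) * g x + a ^ 2) ∂P := by
        congr 1; ext x; ring
    _ = 1 / 8 + (1 / 2 - a) ^ 2 := by rw [hquad, hm, hM]; ring

lemma integral_sq_euclidean [IsProbabilityMeasure P] (hP : SelfSimilar P) (a b : ℝ) :
    ∫ x, ((x.1 - a) ^ 2 + (x.2 - b) ^ 2) ∂P = 1 / 4 + ((1 / 2 - a) ^ 2 + (1 / 2 - b) ^ 2) := by
  have hfst := hP.integral_sub_sq_of_coord continuous_fst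
    (e := fun i => if i = 1 ∨ i = 3 then 2 / 3 else 0) (fun _ _ => rfl)
    (by simp [Fin.sum_univ_four]; norm_num) (by simp [Fin.sum_univ_four]; norm_num) a
  have hsnd := hP.integral_sub_sq_of_coord continuous_snd
    (e := fun i => if i = 2 ∨ i = 3 then 2 / 3 else 0) (fun _ _ => rfl)
    (by simp [Fin.sum_univ_four]; norm_num) (by simp [Fin.sum_univ_four]; norm_num) b
  rw [integral_add (hP.integrable_of_continuous (by fun_prop))
    (hP.integrable_of_continuous (by fun_prop)), hfst, hsnd]
  ring

lemma setIntegral_Jw_sq_euclidean [IsProbabilityMeasure P] (hP : SelfSimilar P) (σ : List (Fin 4))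
    (a b : ℝ) :
    ∫ x in Jw σ, ((x.1 - a) ^ 2 + (x.2 - b) ^ 2) ∂P
      = (1 / 4 ^ σ.length) * ((1 / 9 ^ σ.length) * (1 / 4)
          + (((Sw σ (1 / 2, 1 / 2)).1 - a) ^ 2 + ((Sw σ (1 / 2, 1 / 2)).2 - b) ^ 2)) := by
  induction σ generalizing a b with
  | nil =>
    rw [show Jw [] = K from image_id K, Measure.restrict_eq_self_of_ae_mem hP.ae_mem_K,
      hP.integral_sq_euclidean]
    simp [Sw]
  | cons i σ ih =>
    set a' := 3 * (a - (S i 0).1)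
    set b' := 3 * (b - (S i 0).2)
    have hS : ∀ y, ((S i y).1 - a) ^ 2 + ((S i y).2 - b) ^ 2
        = ((y.1 - a') ^ 2 + (y.2 - b') ^ 2) / 9 := fun y => by
      simp only [S, a', b', Prod.fst_zero, Prod.snd_zero]
      ring
    rw [hP.setIntegral_Jw_cons i σ (by fun_prop),
      show Sw (i :: σ) (1 / 2, 1 / 2) = S i (Sw σ (1 / 2, 1 / 2)) from rfl]
    simp_rw [hS]
    rw [integral_div, ih, List.length_cons, pow_succ, pow_succ]
    ring

end SelfSimilar

theorem stmt_6_general (P : Measure (ℝ × ℝ)) [IsProbabilityMeasure P] (hP : SelfSimilar P)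
    (k : ℕ) (σ : Fin k → Fin 4) (a b : ℝ) :
    ∫ x in Jw (List.ofFn σ), ((x.1 - a) ^ 2 + (x.2 - b) ^ 2) ∂P
      = (1 / 4 ^ k) * ((1 / 9 ^ k) * (1 / 4)
          + (((Sw (List.ofFn σ) (1 / 2, 1 / 2)).1 - a) ^ 2
            + ((Sw (List.ofFn σ) (1 / 2, 1 / 2)).2 - b) ^ 2)) := by
  simpa only [List.length_ofFn] using hP.setIntegral_Jw_sq_euclidean (List.ofFn σ) a b

/-- `∫_{J_σ} ‖x − (a,b)‖² dP = (1/4^k)((1/9^k)(1/4) + ‖S_σ(1/2,1/2) − (a,b)‖²)`. -/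
theorem stmt_6 (P : Measure (ℝ × ℝ)) [IsProbabilityMeasure P] (hP : SelfSimilar P)
    (k : ℕ) (hk : 1 ≤ k) (σ : Fin k → Fin 4) (a b : ℝ) :
    ∫ x in Jw (List.ofFn σ), ((x.1 - a) ^ 2 + (x.2 - b) ^ 2) ∂P
      = (1 / 4 ^ k) * ((1 / 9 ^ k) * (1 / 4)
          + (((Sw (List.ofFn σ) (1 / 2, 1 / 2)).1 - a) ^ 2
            + ((Sw (List.ofFn σ) (1 / 2, 1 / 2)).2 - b) ^ 2)) :=
  stmt_6_general P hP k σ a b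
end

section
/- The distortion error of the two-point set {(1/6, 1/2), (5/6, 1/2)} with respect to P, with the Voronoi boundary being the line x_1 = 1/2, equals 5/36. -/
open MeasureTheory Set
open scoped ENNReal

/-!
`P` is carried by the unit square `K`: since each `S i` maps `K` into itself and contracts by
`1/3`, the mass at distance `> r` from `K` is dominated by the mass at distance `> 3r`, which
tends to `0`. On `S i K` the nearer of the two points is the one in the same half `x₁ ≶ 1/2`, so the
error at `S i x` is `(x₁ - 1/2)²/9 + ((S i x)₂ - 1/2)²`; averaging over `i` and using
self-similarity once more gives `Var x₁ / 9 + Var x₂ = 1/72 + 1/8 = 5/36`, where both variances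
`1/8` solve the recursion `V = V/9 + 1/9` coming from self-similarity.
-/

open Metric Filter Topology
open scoped NNReal

theorem infDist_apply_le_of_lipschitzWith_mapsTo {X : Type*} [MetricSpace X] {f : X → X}
    {c : ℝ≥0} {K : Set X} (hf : LipschitzWith c f) (hfK : MapsTo f K K) (hK : K.Nonempty)
    (x : X) : infDist (f x) K ≤ c * infDist x K := by
  have key : ∀ y ∈ K, infDist (f x) K ≤ c * dist x y := fun y hy =>
    (infDist_le_dist_of_mem (hfK hy)).trans (hf.dist_le_mul x y)
  rcases eq_or_lt_of_le c.coe_nonneg with hc | hc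
  · obtain ⟨y, hy⟩ := hK
    simpa [← hc] using key y hy
  · rw [← div_le_iff₀' hc, le_infDist hK]
    exact fun y hy => (div_le_iff₀' hc).2 (key y hy)

section EqSumMap

variable {X ι : Type*} [MetricSpace X] [MeasurableSpace X] [BorelSpace X] [Fintype ι]
  {μ : Measure X} {f : ι → X → X} {w : ι → ℝ≥0∞} {c : ℝ≥0} {K : Set X}

theorem measure_lt_infDist_le_of_eq_sum_map (hμ : μ = ∑ i, w i • μ.map (f i))
    (hw : ∑ i, w i = 1) (hc : 0 < c) (hf : ∀ i, LipschitzWith c (f i))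
    (hfK : ∀ i, MapsTo (f i) K K) (hK : K.Nonempty) (r : ℝ) :
    μ {x | r < infDist x K} ≤ μ {x | r / c < infDist x K} := by
  have hpre : ∀ i, f i ⁻¹' {x | r < infDist x K} ⊆ {x | r / c < infDist x K} := fun i x hx =>
    (div_lt_iff₀' (NNReal.coe_pos.2 hc)).2
      (hx.trans_le (infDist_apply_le_of_lipschitzWith_mapsTo (hf i) (hfK i) hK x))
  calc μ {x | r < infDist x K}
      = ∑ i, w i * μ (f i ⁻¹' {x | r < infDist x K}) := by
        conv_lhs => rw [hμ]
        simp only [Measure.coe_finsetSum, Finset.sum_apply, Measure.smul_apply, smul_eq_mul,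
          Measure.map_apply (hf _).continuous.measurable
            (measurableSet_lt measurable_const (continuous_infDist_pt K).measurable)]
    _ ≤ ∑ i, w i * μ {x | r / c < infDist x K} := by
        gcongr with i; exact hpre i
    _ = μ {x | r / c < infDist x K} := by rw [← Finset.sum_mul, hw, one_mul]

theorem ae_mem_of_eq_sum_map [IsFiniteMeasure μ] (hμ : μ = ∑ i, w i • μ.map (f i))
    (hw : ∑ i, w i = 1) (hc : 0 < c) (hc1 : c < 1) (hf : ∀ i, LipschitzWith c (f i))
    (hfK : ∀ i, MapsTo (f i) K K) (hK : K.Nonempty) (hKc : IsClosed K) :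
    ∀ᵐ x ∂μ, x ∈ K := by
  set A : ℝ → Set X := fun r => {x | r < infDist x K}
  have hlim : Tendsto (μ ∘ A) atTop (𝓝 0) := by
    have hempty : (⋂ r, A r) = ∅ := eq_empty_of_forall_notMem fun x hx =>
      lt_irrefl (infDist x K) (mem_iInter.1 hx (infDist x K))
    rw [← measure_empty (μ := μ), ← hempty]
    exact tendsto_measure_iInter_atTop
      (fun r => (measurableSet_lt measurable_const
        (continuous_infDist_pt K).measurable).nullMeasurableSet)
      (fun r s hrs x (hx : s < infDist x K) => show r < infDist x K from hrs.trans_lt hx)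
      ⟨0, measure_ne_top μ _⟩
  have hA : ∀ r > 0, μ (A r) = 0 := by
    intro r hr
    have hle : ∀ n : ℕ, μ (A r) ≤ μ (A (r / c ^ n)) := by
      intro n
      induction n with
      | zero => simp
      | succ n ih =>
        refine ih.trans ?_
        rw [pow_succ, ← div_div]
        exact measure_lt_infDist_le_of_eq_sum_map hμ hw hc hf hfK hK _
    have hgrow : Tendsto (fun n : ℕ => r / c ^ n) atTop atTop := by
      simp_rw [div_eq_mul_inv, ← inv_pow]
      exact (tendsto_pow_atTop_atTop_of_one_lt
        (one_lt_inv₀ (NNReal.coe_pos.2 hc) |>.2 (by exact_mod_cast hc1))).const_mul_atTop hr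
    exact le_antisymm (ge_of_tendsto' (hlim.comp hgrow) hle) bot_le
  have hcompl : Kᶜ ⊆ ⋃ n : ℕ, A (1 / (n + 1)) := fun x hx => by
    obtain ⟨n, hn⟩ := exists_nat_one_div_lt ((hKc.notMem_iff_infDist_pos hK).1 hx)
    exact mem_iUnion.2 ⟨n, hn⟩
  exact measure_mono_null hcompl (measure_iUnion_null fun n => hA _ Nat.one_div_pos_of_nat)

theorem integral_eq_sum_integral_comp_of_eq_sum_map (hμ : μ = ∑ i, w i • μ.map (f i))
    (hw : ∀ i, w i ≠ ∞) (hf : ∀ i, Measurable (f i)) {g : X → ℝ} (hg : Continuous g)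
    (hgf : ∀ i, Integrable (fun x => g (f i x)) μ) :
    ∫ x, g x ∂μ = ∑ i, (w i).toReal * ∫ x, g (f i x) ∂μ := by
  have hmap : ∀ i, Integrable g (μ.map (f i)) := fun i =>
    (integrable_map_measure hg.aestronglyMeasurable (hf i).aemeasurable).2 (hgf i)
  conv_lhs => rw [hμ]
  rw [integral_finsetSum_measure fun i _ => (hmap i).smul_measure (hw i)]
  simp only [integral_smul_measure, smul_eq_mul,
    integral_map (hf _).aemeasurable hg.aestronglyMeasurable]

end EqSumMap

theorem integrable_of_ae_mem_compact {X E : Type*} [TopologicalSpace X] [T2Space X]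
    [MeasurableSpace X] [OpensMeasurableSpace X] [NormedAddCommGroup E] {μ : Measure X}
    [IsFiniteMeasure μ] {K : Set X} (hK : IsCompact K) (hμK : ∀ᵐ x ∂μ, x ∈ K) {g : X → E}
    (hg : ContinuousOn g K) : Integrable g μ := by
  simpa [IntegrableOn, Measure.restrict_eq_self_of_ae_mem hμK]
    using hg.integrableOn_compact (μ := μ) hK

theorem integral_quadratic {α : Type*} [MeasurableSpace α] {μ : Measure α}
    [IsProbabilityMeasure μ] {f : α → ℝ} (hf : Integrable f μ)
    (hf2 : Integrable (fun x => f x ^ 2) μ) (a b d : ℝ) :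
    ∫ x, (a * f x ^ 2 + b * f x + d) ∂μ = a * ∫ x, f x ^ 2 ∂μ + b * ∫ x, f x ∂μ + d := by
  rw [integral_add (f := fun x => a * f x ^ 2 + b * f x)
      ((hf2.const_mul a).add (hf.const_mul b)) (integrable_const d),
    integral_add (f := fun x => a * f x ^ 2) (hf2.const_mul a) (hf.const_mul b),
    integral_const_mul, integral_const_mul, integral_const, probReal_univ, one_smul]

namespace SierpinskiCarpet

lemma selfSimilar_iff {P : Measure (ℝ × ℝ)} :
    SelfSimilar P ↔ P = ∑ i, (1 / 4 : ℝ≥0∞) • P.map (S i) := by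
  rw [SelfSimilar, Fin.sum_univ_four]

lemma S_apply_fst_or (i : Fin 4) (x : ℝ × ℝ) :
    (S i x).1 = x.1 / 3 ∨ (S i x).1 = x.1 / 3 + 2 / 3 := by
  unfold S; split_ifs <;> simp

lemma S_apply_snd_or (i : Fin 4) (x : ℝ × ℝ) :
    (S i x).2 = x.2 / 3 ∨ (S i x).2 = x.2 / 3 + 2 / 3 := by
  unfold S; split_ifs <;> simp

lemma mem_K {x : ℝ × ℝ} : x ∈ K ↔ x.1 ∈ Icc 0 1 ∧ x.2 ∈ Icc 0 1 := by
  simp only [K, mem_Icc, Prod.le_def]; tauto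

lemma isCompact_K : IsCompact K := isCompact_Icc

lemma mapsTo_S_K (i : Fin 4) : MapsTo (S i) K K := by
  intro x hx
  rw [mem_K, mem_Icc, mem_Icc] at hx ⊢
  rcases S_apply_fst_or i x with h1 | h1 <;> rcases S_apply_snd_or i x with h2 | h2 <;>
    rw [h1, h2] <;> refine ⟨⟨?_, ?_⟩, ?_, ?_⟩ <;> linarith

lemma lipschitzWith_S (i : Fin 4) : LipschitzWith (1 / 3) (S i) := by
  refine LipschitzWith.of_dist_le_mul fun x y => le_of_eq ?_
  simp only [S, Prod.dist_eq, Real.dist_eq, NNReal.coe_div, NNReal.coe_one, NNReal.coe_ofNat]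
  rw [add_sub_add_right_eq_sub, add_sub_add_right_eq_sub, ← sub_div, ← sub_div, abs_div,
    abs_div, abs_of_pos (three_pos : (0 : ℝ) < 3), max_div_div_right three_pos.le,
    one_div_mul_eq_div]

@[fun_prop]
lemma continuous_S (i : Fin 4) : Continuous (S i) := (lipschitzWith_S i).continuous

variable {P : Measure (ℝ × ℝ)}

lemma ae_mem_K [IsFiniteMeasure P] (hP : SelfSimilar P) : ∀ᵐ x ∂P, x ∈ K :=
  ae_mem_of_eq_sum_map (selfSimilar_iff.1 hP) (by simp [ENNReal.mul_inv_cancel])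
    (by norm_num) (by norm_num) lipschitzWith_S mapsTo_S_K ⟨0, by simp [mem_K]⟩ isClosed_Icc

lemma integrable_of_continuous [IsFiniteMeasure P] (hP : SelfSimilar P) {g : ℝ × ℝ → ℝ}
    (hg : Continuous g) : Integrable g P :=
  integrable_of_ae_mem_compact isCompact_K (ae_mem_K hP) hg.continuousOn

lemma integral_eq_sum_integral_comp [IsFiniteMeasure P] (hP : SelfSimilar P) {g : ℝ × ℝ → ℝ}
    (hg : Continuous g) : ∫ x, g x ∂P = (∑ i, ∫ x, g (S i x) ∂P) / 4 := by
  rw [integral_eq_sum_integral_comp_of_eq_sum_map (selfSimilar_iff.1 hP) (by simp)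
    (fun i => (continuous_S i).measurable) hg
    (fun i => integrable_of_continuous hP (hg.comp (continuous_S i))),
    Finset.sum_div]
  simp [div_eq_inv_mul]

lemma integral_sq_eq_of_comp_S [IsProbabilityMeasure P] (hP : SelfSimilar P) {c : ℝ × ℝ → ℝ}
    (hc : Continuous c) {s : Fin 4 → ℝ} (hcS : ∀ i x, c (S i x) = c x / 3 + s i)
    (hs : ∑ i, s i = 0) (hs2 : ∀ i, s i ^ 2 = 1 / 9) : ∫ x, c x ^ 2 ∂P = 1 / 8 := by
  have hc1 := integrable_of_continuous hP hc
  have hc2 := integrable_of_continuous hP (g := fun x => c x ^ 2) (by fun_prop)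
  have hcomp : ∀ i, ∫ x, c (S i x) ∂P = 3⁻¹ * ∫ x, c x ∂P + s i := fun i => by
    simpa [hcS, div_eq_inv_mul] using integral_quadratic hc1 hc2 0 3⁻¹ (s i)
  have hcomp2 : ∀ i, ∫ x, c (S i x) ^ 2 ∂P
      = 9⁻¹ * ∫ x, c x ^ 2 ∂P + 2 / 3 * s i * ∫ x, c x ∂P + s i ^ 2 := fun i => by
    rw [← integral_quadratic hc1 hc2]
    congr 1; funext x; rw [hcS]; ring
  have hmean : ∫ x, c x ∂P = 0 := by
    have h := integral_eq_sum_integral_comp hP hc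
    simp only [hcomp, Finset.sum_add_distrib, hs, Finset.sum_const, Finset.card_univ,
      Fintype.card_fin, nsmul_eq_mul] at h
    linarith
  have h := integral_eq_sum_integral_comp hP (g := fun x => c x ^ 2) (by fun_prop)
  simp only [hcomp2, hmean, hs2, mul_zero, add_zero, Finset.sum_const, Finset.card_univ,
    Fintype.card_fin, nsmul_eq_mul] at h
  linarith

lemma integral_fst_sub_half_sq [IsProbabilityMeasure P] (hP : SelfSimilar P) :
    ∫ x, (x.1 - 1 / 2) ^ 2 ∂P = 1 / 8 :=
  integral_sq_eq_of_comp_S hP (by fun_prop) (s := fun i => (S i 0).1 - 1 / 3)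
    (fun i x => by simp only [S, Prod.fst_zero, Prod.snd_zero]; ring)
    (by simp [S, Fin.sum_univ_four]; norm_num)
    (fun i => by fin_cases i <;> simp [S, Fin.ext_iff] <;> norm_num)

lemma integral_snd_sub_half_sq [IsProbabilityMeasure P] (hP : SelfSimilar P) :
    ∫ x, (x.2 - 1 / 2) ^ 2 ∂P = 1 / 8 :=
  integral_sq_eq_of_comp_S hP (by fun_prop) (s := fun i => (S i 0).2 - 1 / 3)
    (fun i x => by simp only [S, Prod.fst_zero, Prod.snd_zero]; ring)
    (by simp [S, Fin.sum_univ_four]; norm_num)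
    (fun i => by fin_cases i <;> simp [S, Fin.ext_iff] <;> norm_num)

lemma min_sq_dist_S_of_mem_K (i : Fin 4) {x : ℝ × ℝ} (hx : x ∈ K) :
    min (((S i x).1 - 1 / 6) ^ 2 + ((S i x).2 - 1 / 2) ^ 2)
        (((S i x).1 - 5 / 6) ^ 2 + ((S i x).2 - 1 / 2) ^ 2)
      = (x.1 - 1 / 2) ^ 2 / 9 + ((S i x).2 - 1 / 2) ^ 2 := by
  rw [min_add_add_right]
  obtain ⟨⟨h0, h1⟩, -⟩ := mem_K.1 hx
  rcases S_apply_fst_or i x with h | h <;> rw [h]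
  · rw [min_eq_left (by nlinarith)]; ring
  · rw [min_eq_right (by nlinarith)]; ring

end SierpinskiCarpet

open SierpinskiCarpet in
/-- The distortion error of `{(1/6, 1/2), (5/6, 1/2)}` equals `5/36`. -/
theorem stmt_8 (P : Measure (ℝ × ℝ)) [IsProbabilityMeasure P] (hP : SelfSimilar P) :
    ∫ x, min ((x.1 - 1 / 6) ^ 2 + (x.2 - 1 / 2) ^ 2)
        ((x.1 - 5 / 6) ^ 2 + (x.2 - 1 / 2) ^ 2) ∂P = 5 / 36 := by
  calc _ = (∑ i, ∫ x, min (((S i x).1 - 1 / 6) ^ 2 + ((S i x).2 - 1 / 2) ^ 2)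
          (((S i x).1 - 5 / 6) ^ 2 + ((S i x).2 - 1 / 2) ^ 2) ∂P) / 4 :=
        integral_eq_sum_integral_comp hP (by fun_prop)
    _ = (∑ i : Fin 4,
          (∫ x, (x.1 - 1 / 2) ^ 2 / 9 ∂P + ∫ x, ((S i x).2 - 1 / 2) ^ 2 ∂P)) / 4 := by
        refine congrArg (· / 4) (Finset.sum_congr rfl fun i _ => ?_)
        rw [← integral_add (integrable_of_continuous hP (by fun_prop))
          (integrable_of_continuous hP (by fun_prop))]
        exact integral_congr_ae (by
          filter_upwards [ae_mem_K hP] with x hx using min_sq_dist_S_of_mem_K i hx)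
    _ = ∫ x, (x.1 - 1 / 2) ^ 2 / 9 ∂P + ∫ x, (x.2 - 1 / 2) ^ 2 ∂P := by
        rw [Finset.sum_add_distrib, add_div,
          integral_eq_sum_integral_comp hP (g := fun y => (y.2 - 1 / 2) ^ 2) (by fun_prop)]
        simp
    _ = 5 / 36 := by
        rw [integral_div, integral_fst_sub_half_sq hP, integral_snd_sub_half_sq hP]
        norm_num
end

section
/- The β-dimensional quantization coefficient for P does not exist: the sequence n^{2/β} V_n has set of accumulation points (along n with 4^ℓ ≤ n < 2·4^ℓ) equal to a nondegenerate closed interval, hence lim_{n→∞} n^{2/β} V_n does not exist, where β = log 4 / log 3. -/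
open Filter Set Topology

/-!
Writing `n = x · 4^ℓ` with `x ∈ [1, 2]`, the scaling `4^{2/β} = 9` turns `n^{2/β} V_n` into
`f(x) = x^{2/β} (13 - 4x) / 36`, independently of `ℓ`. Every `x ∈ [1, 2]` is the limit of
`⌊x 4^ℓ⌋ / 4^ℓ`, so each value of `f` on `[1, 2]` is a cluster point of the sequence, and by the
intermediate value theorem these values fill `[f 1, f 2] = [1/4, 5/12]`.
-/

lemma two_div_log_four_div_log_three : 2 / (Real.log 4 / Real.log 3) = Real.logb 2 3 := by
  have hlog4 : Real.log 4 = 2 * Real.log 2 := by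
    rw [show (4 : ℝ) = 2 ^ 2 by norm_num, Real.log_pow, Nat.cast_ofNat]
  have hlog2 : Real.log 2 ≠ 0 := (Real.log_pos one_lt_two).ne'
  have hlog3 : Real.log 3 ≠ 0 := (Real.log_pos (by norm_num)).ne'
  rw [Real.logb, hlog4]
  field_simp

lemma two_rpow_logb_two_three : (2 : ℝ) ^ Real.logb 2 3 = 3 :=
  Real.rpow_logb (by norm_num) (by norm_num) (by norm_num)

lemma four_rpow_logb_two_three : (4 : ℝ) ^ Real.logb 2 3 = 9 := by
  rw [show (4 : ℝ) = 2 * 2 by norm_num, Real.mul_rpow zero_le_two zero_le_two,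
    two_rpow_logb_two_three]
  norm_num

noncomputable def carpetProfile (c t : ℝ) : ℝ := t ^ c * (13 - 4 * t) / 36

lemma carpetProfile_one (c : ℝ) : carpetProfile c 1 = 1 / 4 := by
  norm_num [carpetProfile]

lemma carpetProfile_two {c : ℝ} (hc : (2 : ℝ) ^ c = 3) : carpetProfile c 2 = 5 / 12 := by
  norm_num [carpetProfile, hc]

lemma continuousOn_carpetProfile (c : ℝ) : ContinuousOn (carpetProfile c) (Icc 1 2) :=
  ((continuousOn_id.rpow_const fun t ht => Or.inl (zero_lt_one.trans_le ht.1).ne').mul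
    (by fun_prop)).div_const _

lemma natCast_rpow_mul_eq_carpetProfile {c : ℝ} (hc : (4 : ℝ) ^ c = 9) (ℓ n : ℕ) :
    (n : ℝ) ^ c * ((1 / 36 ^ (ℓ + 1)) * (13 * 4 ^ ℓ - 4 * (n : ℝ))) =
      carpetProfile c (n / 4 ^ ℓ) := by
  have h4ℓ : (0 : ℝ) < 4 ^ ℓ := by positivity
  have hsplit : (n : ℝ) ^ c = ((n : ℝ) / 4 ^ ℓ) ^ c * 9 ^ ℓ := by
    rw [← hc, Real.rpow_pow_comm zero_le_four,
      ← Real.mul_rpow (by positivity) h4ℓ.le, div_mul_cancel₀ _ h4ℓ.ne']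
  have h36 : (36 : ℝ) ^ ℓ = 4 ^ ℓ * 9 ^ ℓ := by rw [← mul_pow]; norm_num
  rw [hsplit, carpetProfile, pow_succ, h36]
  field_simp

theorem mapClusterPt_of_eq_comp_div_pow {X : Type*} [TopologicalSpace X] {u : ℕ → X}
    {g : ℝ → X} {r : ℕ} (hr : 1 < r)
    (hu : ∀ ℓ n : ℕ, r ^ ℓ ≤ n → n ≤ 2 * r ^ ℓ → u n = g (n / r ^ ℓ))
    {x : ℝ} (hx : x ∈ Icc 1 2) (hg : ContinuousWithinAt g (Icc 1 2) x) :
    MapClusterPt (g x) atTop u := by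
  set φ : ℕ → ℕ := fun k => ⌊x * (r : ℝ) ^ k⌋₊
  have hrk : ∀ k : ℕ, (0 : ℝ) < (r : ℝ) ^ k := fun k => by positivity
  have hφ_ge : ∀ k, r ^ k ≤ φ k := fun k =>
    Nat.le_floor (by push_cast; nlinarith [hx.1, hrk k])
  have hφ_le : ∀ k, φ k ≤ 2 * r ^ k := fun k =>
    (Nat.floor_le_floor (by push_cast; nlinarith [hx.2, hrk k])).trans_eq (Nat.floor_natCast _)
  have hφ_top : Tendsto φ atTop atTop :=
    tendsto_atTop_mono hφ_ge (tendsto_pow_atTop_atTop_of_one_lt hr)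
  have hratio_mem : ∀ k, (φ k : ℝ) / (r : ℝ) ^ k ∈ Icc 1 2 := fun k => by
    rw [mem_Icc, le_div_iff₀ (hrk k), div_le_iff₀ (hrk k)]
    exact ⟨by exact_mod_cast (one_mul (r ^ k)).trans_le (hφ_ge k), by exact_mod_cast hφ_le k⟩
  have hratio : Tendsto (fun k => (φ k : ℝ) / (r : ℝ) ^ k) atTop (𝓝[Icc 1 2] x) :=
    tendsto_nhdsWithin_iff.2 ⟨(tendsto_nat_floor_mul_div_atTop (by linarith [hx.1])).comp
      (tendsto_pow_atTop_atTop_of_one_lt (by exact_mod_cast hr)), .of_forall hratio_mem⟩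
  refine MapClusterPt.of_comp hφ_top (Tendsto.mapClusterPt ?_)
  refine (hg.tendsto.comp hratio).congr fun k => ?_
  simpa using (hu k (φ k) (hφ_ge k) (hφ_le k)).symm

/-- The `β`-dimensional quantization coefficient does not exist (`β = log 4 / log 3`): the
sequence `n^{2/β} V_n` has a nondegenerate closed interval of accumulation points, hence it
has no limit. Assumes `V_n = (1/36^{ℓ+1})(13·4^ℓ − 4n)` for `4^ℓ ≤ n ≤ 2·4^ℓ`. -/
theorem stmt_18 (β : ℝ) (hβ : β = Real.log 4 / Real.log 3) (V : ℕ → ℝ)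
    (hV : ∀ ℓ n : ℕ, 4 ^ ℓ ≤ n → n ≤ 2 * 4 ^ ℓ →
      V n = (1 / 36 ^ (ℓ + 1)) * (13 * 4 ^ ℓ - 4 * (n : ℝ))) :
    (∃ a b : ℝ, a < b ∧ ∀ y ∈ Icc a b,
        MapClusterPt y atTop (fun n : ℕ => (n : ℝ) ^ ((2 : ℝ) / β) * V n)) ∧
      ¬ ∃ L : ℝ, Tendsto (fun n : ℕ => (n : ℝ) ^ ((2 : ℝ) / β) * V n) atTop (nhds L) := by
  rw [hβ, two_div_log_four_div_log_three]
  set c := Real.logb 2 3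
  have hcluster : ∀ y ∈ Icc (1 / 4 : ℝ) (5 / 12),
      MapClusterPt y atTop (fun n : ℕ => (n : ℝ) ^ c * V n) := by
    intro y hy
    rw [← carpetProfile_one c, ← carpetProfile_two two_rpow_logb_two_three] at hy
    obtain ⟨x, hx, rfl⟩ :=
      intermediate_value_Icc one_le_two (continuousOn_carpetProfile c) hy
    refine mapClusterPt_of_eq_comp_div_pow (r := 4) (by norm_num) (fun ℓ n h₁ h₂ => ?_) hx
      (continuousOn_carpetProfile c x hx)
    rw [hV ℓ n h₁ h₂, natCast_rpow_mul_eq_carpetProfile four_rpow_logb_two_three, Nat.cast_ofNat]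
  refine ⟨⟨1 / 4, 5 / 12, by norm_num, hcluster⟩, fun ⟨L, hL⟩ => ?_⟩
  have h₁ : (1 / 4 : ℝ) = L := eq_of_nhds_neBot ((hcluster _ (by norm_num)).clusterPt.mono hL)
  have h₂ : (5 / 12 : ℝ) = L := eq_of_nhds_neBot ((hcluster _ (by norm_num)).clusterPt.mono hL)
  linarith
end
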